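/- Let X be a subshift over a finite alphabet Λ, and consider the map Ξ : X → Ω_X, Ξ(x) = ξ_x. Then the following are equivalent: (i) X is a subshift of finite type; (ii) Ξ is onto Ω_X; (iii) Ξ is continuous; (iv) Ξ is a homeomorphism from X onto Ω_X. -/

import Mathlib

open scoped Classical

namespace SubshiftPaper

variable {Λ : Type}

/-- The left shift on infinite words. -/
def shiftMap (x : ℕ → Λ) : ℕ → Λ := fun n => x (n + 1)

/-- Concatenation of a finite word with an infinite word. -/
def cat (α : List Λ) (y : ℕ → Λ) : ℕ → Λ := fun n => α.getD n (y (n - α.length))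

/-- `α` is a prefix of the infinite word `x`. -/
def Pref (α : List Λ) (x : ℕ → Λ) : Prop := ∀ (i : ℕ) (h : i < α.length), x i = α[i]

/-- The tail of `x` after `n` letters. -/
def tail (x : ℕ → Λ) (n : ℕ) : ℕ → Λ := fun i => x (n + i)

/-- `α` occurs in `x` at position `n`. -/
def OccursAt (α : List Λ) (x : ℕ → Λ) (n : ℕ) : Prop :=
  ∀ (i : ℕ) (h : i < α.length), x (n + i) = α[i]

/-- `α` occurs in `x` (as a contiguous block of letters). -/
def Occurs (α : List Λ) (x : ℕ → Λ) : Prop := ∃ n, OccursAt α x n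

/-- `X` is a subshift: a nonempty closed shift-invariant subset. -/
def IsSubshift [TopologicalSpace Λ] (X : Set (ℕ → Λ)) : Prop :=
  X.Nonempty ∧ IsClosed X ∧ ∀ x ∈ X, shiftMap x ∈ X

/-- The set of infinite words avoiding all words in `F`. -/
def ForbidSpace (F : Set (List Λ)) : Set (ℕ → Λ) := {x | ∀ α ∈ F, ¬ Occurs α x}

/-- `X` is a subshift of finite type. -/
def IsSFT (X : Set (ℕ → Λ)) : Prop := ∃ F : Set (List Λ), F.Finite ∧ X = ForbidSpace F

/-- The follower set of a finite word. -/
def follower (X : Set (ℕ → Λ)) (α : List Λ) : Set (ℕ → Λ) := {y | y ∈ X ∧ cat α y ∈ X}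

/-- The cylinder of a finite word. -/
def cylinder (X : Set (ℕ → Λ)) (α : List Λ) : Set (ℕ → Λ) := {x | x ∈ X ∧ Pref α x}

/-- The language of `X`. -/
def Language (X : Set (ℕ → Λ)) : Set (List Λ) := {α | ∃ x ∈ X, Occurs α x}

/-- The embedding of finite words into the free group. -/
def wd (α : List Λ) : FreeGroup Λ := (α.map FreeGroup.of).prod

/-- Indicator function of a set of group elements. -/
noncomputable def chi (s : Set (FreeGroup Λ)) : FreeGroup Λ → Bool :=
  fun g => if g ∈ s then true else false

/-- The set `ξ_x ⊆ 𝔽`. -/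
def xiSet [DecidableEq Λ] (X : Set (ℕ → Λ)) (x : ℕ → Λ) : Set (FreeGroup Λ) :=
  {g | ∃ α β : List Λ, g = wd α * (wd β)⁻¹ ∧
        FreeGroup.norm g = α.length + β.length ∧
        Pref α x ∧ tail x α.length ∈ follower X α ∩ follower X β}

/-- `ξ_x` as an element of `2^𝔽`. -/
noncomputable def xiB [DecidableEq Λ] (X : Set (ℕ → Λ)) (x : ℕ → Λ) : FreeGroup Λ → Bool :=
  chi (xiSet X x)

/-- The spectrum `Ω_X`: the closure of `{ξ_x : x ∈ X}` in `2^𝔽`. -/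
noncomputable def Omega [DecidableEq Λ] (X : Set (ℕ → Λ)) : Set (FreeGroup Λ → Bool) :=
  closure ((fun x => xiB X x) '' X)

/-- Left translation of an element of `2^𝔽`. -/
def translate (g : FreeGroup Λ) (ξ : FreeGroup Λ → Bool) : FreeGroup Λ → Bool :=
  fun h => ξ (g⁻¹ * h)

/-- `x` is the stem of `ξ`: `ξ ∩ 𝔽₊` is exactly the set of prefixes of `x`. -/
def IsStem (ξ : FreeGroup Λ → Bool) (x : ℕ → Λ) : Prop :=
  {g | ξ g = true} ∩ {g | ∃ α : List Λ, g = wd α} =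
    {g | ∃ α : List Λ, g = wd α ∧ Pref α x}

/-- `x` is the stem of `ξ` at `g`: `ξ ∩ g𝔽₊ = {gα : α is a prefix of x}`. -/
def IsStemAt (ξ : FreeGroup Λ → Bool) (g : FreeGroup Λ) (x : ℕ → Λ) : Prop :=
  {h | ξ h = true} ∩ {h | ∃ α : List Λ, h = g * wd α} =
    {h | ∃ α : List Λ, h = g * wd α ∧ Pref α x}

/-- The orbit of `ξ` under the spectral partial action. -/
def Orbit (ξ : FreeGroup Λ → Bool) : Set (FreeGroup Λ → Bool) :=
  {η | ∃ g : FreeGroup Λ, ξ g⁻¹ = true ∧ η = translate g ξ}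

/-- Topological freeness of the spectral partial action. -/
noncomputable def TopFree [DecidableEq Λ] (X : Set (ℕ → Λ)) : Prop :=
  ∀ g : FreeGroup Λ, g ≠ 1 →
    ∀ U : Set (FreeGroup Λ → Bool), IsOpen U →
      (U ∩ Omega X ⊆ {ξ | ξ g⁻¹ = true ∧ translate g ξ = ξ}) → U ∩ Omega X = ∅

/-- The periodic infinite word `γ^∞`. -/
noncomputable def perInf [Nonempty Λ] (γ : List Λ) : ℕ → Λ :=
  fun n => γ.getD (n % γ.length) (Classical.arbitrary Λ)

/-- `n`-fold concatenation of a finite word with itself. -/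
def rep : ℕ → List Λ → List Λ
  | 0, _ => []
  | n + 1, γ => γ ++ rep n γ

/-- `γ` is a circuit relative to `X`. -/
noncomputable def IsCircuit [Nonempty Λ] (X : Set (ℕ → Λ)) (γ : List Λ) : Prop :=
  γ ≠ [] ∧ perInf γ ∈ X

/-- `y` is an exit for the circuit `γ`. -/
noncomputable def IsExit [Nonempty Λ] (X : Set (ℕ → Λ)) (γ : List Λ) (y : ℕ → Λ) : Prop :=
  y ≠ perInf γ ∧ cat γ y ∈ X

/-- `z` is a strong exit for the circuit `γ`. -/
noncomputable def IsStrongExit [Nonempty Λ] (X : Set (ℕ → Λ)) (γ : List Λ) (z : ℕ → Λ) : Prop :=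
  z ≠ perInf γ ∧ ∀ n : ℕ, cat (rep n γ) z ∈ X

/-- The sets `X_g` of the standard partial action. -/
def Xg [DecidableEq Λ] (X : Set (ℕ → Λ)) (g : FreeGroup Λ) : Set (ℕ → Λ) :=
  {x | ∃ α β : List Λ, g = wd α * (wd β)⁻¹ ∧
        FreeGroup.norm g = α.length + β.length ∧
        ∃ y ∈ follower X α ∩ follower X β, x = cat α y}

/-- `x` is a fixed point for `θ_g`. -/
def IsThetaFixed [DecidableEq Λ] (X : Set (ℕ → Λ)) (g : FreeGroup Λ) (x : ℕ → Λ) : Prop :=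
  ∃ α β : List Λ, g = wd α * (wd β)⁻¹ ∧
    FreeGroup.norm g = α.length + β.length ∧
    ∃ y ∈ follower X α ∩ follower X β, x = cat β y ∧ cat α y = x

/-- `x` may be collectively reached from the finite set `B`. -/
def CollReached (X : Set (ℕ → Λ)) (B : Finset (List Λ)) (x : ℕ → Λ) : Prop :=
  ∃ α γ : List Λ, Pref α x ∧ ∀ β ∈ B, cat (β ++ γ) (tail x α.length) ∈ X

/-- `X` is collectively cofinal. -/
def CollCofinal (X : Set (ℕ → Λ)) : Prop :=
  ∀ B : Finset (List Λ), ↑B ⊆ Language X → (⋂ β ∈ B, follower X β).Nonempty →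
    ∀ x ∈ X, CollReached X B x

/-- `X` is strongly cofinal. -/
def StrongCofinal (X : Set (ℕ → Λ)) : Prop :=
  ∀ β ∈ Language X, ∃ M : ℕ, ∀ x ∈ X, ∃ α γ : List Λ, Pref α x ∧
    cat (β ++ γ) (tail x α.length) ∈ X ∧ α.length + γ.length ≤ M

/-- The even shift. -/
def evenShift : Set (ℕ → Fin 2) :=
  ForbidSpace {w | ∃ n : ℕ, w = 0 :: (List.replicate (2 * n + 1) 1 ++ [0])}

/-!
(i) ⇒ (iii): if `X = X_F` with all words of `F` of length at most `M`, whether `αβ⁻¹ ∈ ξ_x`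
depends only on the first `|α| + M` letters of `x`. (iii) ⇒ (ii), (iv): `ξ_x ∩ 𝔽₊` is the set of
prefixes of `x`, so `Ξ` is injective, and a continuous injection of the compact space `X` is a
closed embedding whose image is closed, hence equal to `Ω_X`. (ii) ⇒ (i): a subshift not of finite
type has arbitrarily long minimal forbidden words `a w b`; they give `q ∈ X` with `aq ∉ X` but
`aq` arbitrarily close to `X`, and a limit point of the `ξ_q` lies in `Ω_X` but is no `ξ_x`.
-/

section Words

variable {Λ : Type}

@[simp] lemma tail_zero (x : ℕ → Λ) : tail x 0 = x := funext fun i => by simp [tail]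

@[simp] lemma cat_nil (y : ℕ → Λ) : cat ([] : List Λ) y = y := funext fun n => by simp [cat]

lemma cat_apply_of_lt (α : List Λ) (y : ℕ → Λ) {n : ℕ} (h : n < α.length) :
    cat α y n = α[n] := by simp [cat, h]

lemma cat_apply_of_le (α : List Λ) (y : ℕ → Λ) {n : ℕ} (h : α.length ≤ n) :
    cat α y n = y (n - α.length) := by simp [cat, h]

lemma cat_tail {α : List Λ} {x : ℕ → Λ} (h : Pref α x) : cat α (tail x α.length) = x := by
  funext n
  rcases lt_or_ge n α.length with hn | hn
  · rw [cat_apply_of_lt α _ hn, h n hn]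
  · rw [cat_apply_of_le α _ hn, tail, Nat.add_sub_cancel' hn]

lemma pref_cons_cat (a : Λ) {v : List Λ} {q : ℕ → Λ} (h : Pref v q) :
    Pref (a :: v) (cat [a] q) := by
  rintro (_ | i) hi
  · simp [cat]
  · simpa [cat] using h i (by simpa using hi)

lemma mem_language_of_pref {X : Set (ℕ → Λ)} {α : List Λ} {x : ℕ → Λ} (hx : x ∈ X)
    (h : Pref α x) : α ∈ Language X :=
  ⟨x, hx, 0, fun i hi => by simpa using h i hi⟩

lemma Pref.of_mem_cylinder {α : List Λ} {x x' : ℕ → Λ} {n : ℕ} (h : Pref α x)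
    (hx' : x' ∈ PiNat.cylinder x n) (hn : α.length ≤ n) : Pref α x' :=
  fun i hi => (PiNat.mem_cylinder_iff.1 hx' i (by omega)).trans (h i hi)

lemma tail_mem_cylinder {x x' : ℕ → Λ} {a n : ℕ} (h : x' ∈ PiNat.cylinder x (a + n)) :
    tail x' a ∈ PiNat.cylinder (tail x a) n :=
  PiNat.mem_cylinder_iff.2 fun i hi => PiNat.mem_cylinder_iff.1 h (a + i) (by omega)

lemma cat_mem_cylinder_cat (α : List Λ) {q z : ℕ → Λ} {N : ℕ} (h : q ∈ PiNat.cylinder z N) :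
    cat α q ∈ PiNat.cylinder (cat α z) N := by
  refine PiNat.mem_cylinder_iff.2 fun i hi => ?_
  rcases lt_or_ge i α.length with hα | hα
  · rw [cat_apply_of_lt α q hα, cat_apply_of_lt α z hα]
  · rw [cat_apply_of_le α q hα, cat_apply_of_le α z hα, PiNat.mem_cylinder_iff.1 h _ (by omega)]

/-- A forbidden word of length at most `M` occurring in `βy'` either lies in `y'` or lies inside
`β` followed by the first `M` letters of `y'`, which are those of `y`. -/
lemma cat_mem_forbidSpace_of_mem_cylinder {F : Set (List Λ)} {M : ℕ}
    (hM : ∀ w ∈ F, w.length ≤ M) {β : List Λ} {y y' : ℕ → Λ}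
    (hy' : y' ∈ ForbidSpace F) (hyy' : y' ∈ PiNat.cylinder y M)
    (h : cat β y ∈ ForbidSpace F) : cat β y' ∈ ForbidSpace F := by
  rintro w hw ⟨n, hocc⟩
  by_cases hn : β.length ≤ n
  · refine hy' w hw ⟨n - β.length, fun i hi => ?_⟩
    rw [← hocc i hi, cat_apply_of_le β y' (by omega)]
    congr 1; omega
  · refine h w hw ⟨n, fun i hi => ?_⟩
    rw [← hocc i hi]
    rcases lt_or_ge (n + i) β.length with h2 | h2
    · rw [cat_apply_of_lt β y h2, cat_apply_of_lt β y' h2]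
    · rw [cat_apply_of_le β y h2, cat_apply_of_le β y' h2]
      exact (PiNat.mem_cylinder_iff.1 hyy' _ (by have := hM w hw; omega)).symm

end Words

section Cylinders

variable {Λ : Type} [TopologicalSpace Λ] [DiscreteTopology Λ]

lemma continuousOn_of_eqOn_cylinder {β : Type} [TopologicalSpace β] {f : (ℕ → Λ) → β}
    {X : Set (ℕ → Λ)} (N : ℕ) (h : ∀ x ∈ X, ∀ x' ∈ X, x' ∈ PiNat.cylinder x N → f x' = f x) :
    ContinuousOn f X := fun x hx =>
  continuousWithinAt_const.congr_of_eventuallyEq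
    (mem_nhdsWithin.2 ⟨PiNat.cylinder x N, PiNat.isOpen_cylinder _ x N,
      PiNat.self_mem_cylinder x N, fun _ ⟨hx'N, hx'⟩ => h x hx _ hx' hx'N⟩) rfl

lemma mem_of_forall_exists_mem_cylinder {s : Set (ℕ → Λ)} (hs : IsClosed s)
    {y : ℕ → Λ} (h : ∀ N, ∃ p ∈ s, p ∈ PiNat.cylinder y N) : y ∈ s := by
  by_contra hy
  obtain ⟨N, hN⟩ := PiNat.exists_disjoint_cylinder hs hy
  obtain ⟨p, hp, hpN⟩ := h N
  exact hN.ne_of_mem hp hpN rfl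

end Cylinders

section Subshift

variable {Λ : Type} [TopologicalSpace Λ] {X : Set (ℕ → Λ)}

lemma IsSubshift.tail_mem (hX : IsSubshift X) {x : ℕ → Λ} (hx : x ∈ X) (n : ℕ) :
    tail x n ∈ X := by
  induction n with
  | zero => simpa using hx
  | succ n ih =>
    have : tail x (n + 1) = shiftMap (tail x n) := funext fun i => by
      simp only [tail, shiftMap]; congr 1; omega
    exact this ▸ hX.2.2 _ ih

lemma IsSubshift.exists_pref_of_mem_language (hX : IsSubshift X) {α : List Λ}
    (h : α ∈ Language X) : ∃ x ∈ X, Pref α x := by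
  obtain ⟨x, hx, n, hn⟩ := h
  exact ⟨tail x n, hX.tail_mem hx n, hn⟩

end Subshift

section ReducedForm

variable {Λ : Type}

@[simp] lemma wd_nil : wd ([] : List Λ) = 1 := rfl

def posLetters (α : List Λ) : List (Λ × Bool) := α.map (·, true)

lemma wd_eq_mk (α : List Λ) : wd α = FreeGroup.mk (posLetters α) := by
  induction α with
  | nil => rfl
  | cons a α ih => simp [wd, posLetters] at ih ⊢; rw [ih, FreeGroup.of, FreeGroup.mul_mk]; rfl

lemma isReduced_posLetters (α : List Λ) : FreeGroup.IsReduced (posLetters α) := by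
  simpa [FreeGroup.IsReduced, posLetters, List.isChain_map] using
    List.isChain_iff_getElem.mpr fun _ _ => trivial

lemma eq_of_posLetters_append_invRev_eq {α β α' β' : List Λ}
    (h : posLetters α ++ FreeGroup.invRev (posLetters β) =
      posLetters α' ++ FreeGroup.invRev (posLetters β')) : α = α' ∧ β = β' := by
  have hpos := congrArg (List.filterMap fun p : Λ × Bool => if p.2 then some p.1 else none) h
  have hneg := congrArg (List.filterMap fun p : Λ × Bool => if p.2 then none else some p.1) h
  simp [posLetters, FreeGroup.invRev, List.filterMap_map, Function.comp_def] at hpos hneg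
  exact ⟨hpos, hneg⟩

variable [DecidableEq Λ]

lemma toWord_wd (α : List Λ) : (wd α).toWord = posLetters α := by
  rw [wd_eq_mk, FreeGroup.toWord_mk, (isReduced_posLetters α).reduce_eq]

@[simp] lemma norm_wd (α : List Λ) : FreeGroup.norm (wd α) = α.length := by
  simp [FreeGroup.norm, toWord_wd, posLetters]

/-- `toWord (αβ⁻¹)` is a sublist of `α ++ β⁻¹`; in reduced form the lengths agree. -/
lemma toWord_wd_mul_inv {α β : List Λ}
    (h : FreeGroup.norm (wd α * (wd β)⁻¹) = α.length + β.length) :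
    (wd α * (wd β)⁻¹).toWord = posLetters α ++ FreeGroup.invRev (posLetters β) := by
  have hsub := FreeGroup.toWord_mul_sublist (wd α) (wd β)⁻¹
  rw [FreeGroup.toWord_inv, toWord_wd, toWord_wd] at hsub
  exact hsub.eq_of_length (by simpa [FreeGroup.norm, posLetters] using h)

lemma eq_of_reduced_form {α β α' β' : List Λ} (h : wd α * (wd β)⁻¹ = wd α' * (wd β')⁻¹)
    (hn : FreeGroup.norm (wd α * (wd β)⁻¹) = α.length + β.length)
    (hn' : FreeGroup.norm (wd α' * (wd β')⁻¹) = α'.length + β'.length) :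
    α = α' ∧ β = β' := by
  have := congrArg FreeGroup.toWord h
  rw [toWord_wd_mul_inv hn, toWord_wd_mul_inv hn'] at this
  exact eq_of_posLetters_append_invRev_eq this

end ReducedForm

section Xi

variable {Λ : Type} [DecidableEq Λ] {X : Set (ℕ → Λ)} {x : ℕ → Λ}

lemma xiB_eq_true_iff {g : FreeGroup Λ} : xiB X x g = true ↔ g ∈ xiSet X x := by
  simp [xiB, chi]

variable [TopologicalSpace Λ]

lemma mem_xiSet_iff (hX : IsSubshift X) (hx : x ∈ X) {α β : List Λ}
    (hn : FreeGroup.norm (wd α * (wd β)⁻¹) = α.length + β.length) :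
    wd α * (wd β)⁻¹ ∈ xiSet X x ↔ Pref α x ∧ cat β (tail x α.length) ∈ X := by
  constructor
  · rintro ⟨α', β', h, hn', hα', -, -, hβ'⟩
    obtain ⟨rfl, rfl⟩ := eq_of_reduced_form h.symm (h ▸ hn') hn
    exact ⟨hα', hβ'⟩
  · rintro ⟨hα, hβ⟩
    have htail := hX.tail_mem hx α.length
    exact ⟨α, β, rfl, hn, hα, ⟨htail, (cat_tail hα).symm ▸ hx⟩, htail, hβ⟩

lemma wd_mem_xiSet_iff (hX : IsSubshift X) (hx : x ∈ X) (α : List Λ) :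
    wd α ∈ xiSet X x ↔ Pref α x := by
  simpa [hX.tail_mem hx] using mem_xiSet_iff hX hx (α := α) (β := []) (by simp)

lemma inv_wd_mem_xiSet_iff (hX : IsSubshift X) (hx : x ∈ X) (β : List Λ) :
    (wd β)⁻¹ ∈ xiSet X x ↔ cat β x ∈ X := by
  simpa [Pref] using mem_xiSet_iff hX hx (α := []) (β := β) (by simp [FreeGroup.norm_inv_eq])

lemma eq_of_forall_xiB_wd_eq (hX : IsSubshift X) {x' : ℕ → Λ} (hx : x ∈ X) (hx' : x' ∈ X)
    (h : ∀ α, xiB X x (wd α) = xiB X x' (wd α)) : x = x' := by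
  funext n
  have hpref : Pref (List.ofFn fun i : Fin (n + 1) => x i) x := fun i _ => by
    simp only [List.getElem_ofFn]
  have hpref' := hpref
  rw [← wd_mem_xiSet_iff hX hx, ← xiB_eq_true_iff, h, xiB_eq_true_iff,
    wd_mem_xiSet_iff hX hx'] at hpref'
  rw [hpref n (by simp), hpref' n (by simp)]

lemma xiB_injOn (hX : IsSubshift X) : Set.InjOn (xiB X) X :=
  fun _ hx _ hx' h => eq_of_forall_xiB_wd_eq hX hx hx' fun α => congrFun h (wd α)

end Xi

section FiniteType

variable {Λ : Type} [DecidableEq Λ] [TopologicalSpace Λ] [DiscreteTopology Λ]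
  {X : Set (ℕ → Λ)}

lemma continuousOn_xiB_of_isSFT (hX : IsSubshift X) (hsft : IsSFT X) :
    ContinuousOn (xiB X) X := by
  obtain ⟨F, hF, hXF⟩ := hsft
  obtain ⟨M, hM⟩ : ∃ M, ∀ w ∈ F, w.length ≤ M :=
    ⟨_, fun w hw => le_csSup (hF.image List.length).bddAbove ⟨w, hw, rfl⟩⟩
  refine continuousOn_pi.2 fun g => ?_
  by_cases hg : ∃ α β : List Λ, g = wd α * (wd β)⁻¹ ∧
      FreeGroup.norm g = α.length + β.length
  · obtain ⟨α, β, rfl, hn⟩ := hg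
    have transfer : ∀ x ∈ X, ∀ x' ∈ X, x' ∈ PiNat.cylinder x (α.length + M) →
        wd α * (wd β)⁻¹ ∈ xiSet X x → wd α * (wd β)⁻¹ ∈ xiSet X x' := by
      intro x hx x' hx' hxx'
      rw [mem_xiSet_iff hX hx hn, mem_xiSet_iff hX hx' hn]
      refine fun ⟨hα, hβ⟩ => ⟨hα.of_mem_cylinder hxx' (by omega), ?_⟩
      rw [hXF] at hβ ⊢
      exact cat_mem_forbidSpace_of_mem_cylinder hM (hXF ▸ hX.tail_mem hx' _)
        (tail_mem_cylinder hxx') hβ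
    refine continuousOn_of_eqOn_cylinder (α.length + M) fun x hx x' hx' hxx' => ?_
    rw [Bool.eq_iff_iff, xiB_eq_true_iff, xiB_eq_true_iff]
    exact ⟨transfer x' hx' x hx ((PiNat.mem_cylinder_comm _ _ _).1 hxx'),
      transfer x hx x' hx' hxx'⟩
  · have : (xiB X · g) = fun _ => false := funext fun x => by
      rw [Bool.eq_false_iff, Ne, xiB_eq_true_iff]
      exact fun ⟨α, β, hg', hn, _⟩ => hg ⟨α, β, hg', hn⟩
    exact this ▸ continuousOn_const

end FiniteType

section MinimalForbiddenWords

variable {Λ : Type} [TopologicalSpace Λ] {X : Set (ℕ → Λ)}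

def IsMinForbidden (X : Set (ℕ → Λ)) (u : List Λ) : Prop :=
  u ∉ Language X ∧ u.tail ∈ Language X ∧ u.dropLast ∈ Language X

/-- A shortest factor of `y` outside the language is a minimal forbidden word. -/
lemma IsSubshift.exists_minForbidden_of_not_mem_language (hX : IsSubshift X) {y : ℕ → Λ}
    (h : ∃ L j, (List.range' j L).map y ∉ Language X) :
    ∃ u, IsMinForbidden X u ∧ Occurs u y := by
  obtain ⟨j, hj⟩ := Nat.find_spec h
  obtain ⟨L, hL⟩ : ∃ L, Nat.find h = L + 1 := by
    refine Nat.exists_eq_add_one.2 (Nat.pos_of_ne_zero fun h0 => hj ?_)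
    obtain ⟨x, hx⟩ := hX.1
    simpa [h0] using mem_language_of_pref (α := []) hx (by simp [Pref])
  have hmin : ∀ j', (List.range' j' L).map y ∈ Language X := by
    simpa using Nat.find_min h (m := L) (by omega)
  rw [hL] at hj
  refine ⟨_, ⟨hj, ?_, ?_⟩, j, fun i hi => by simp⟩
  · simpa [List.range'_succ] using hmin (j + 1)
  · simpa [List.range'_concat] using hmin j

lemma IsSubshift.eq_forbidSpace_minForbidden [DiscreteTopology Λ] (hX : IsSubshift X) :
    X = ForbidSpace {u | IsMinForbidden X u} := by
  refine subset_antisymm (fun x hx u hu hocc => hu.1 ⟨x, hx, hocc⟩) fun y hy =>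
    mem_of_forall_exists_mem_cylinder hX.2.1 fun N => ?_
  have hN : (List.range' 0 N).map y ∈ Language X := by
    by_contra hN
    obtain ⟨u, hu, hocc⟩ := hX.exists_minForbidden_of_not_mem_language ⟨N, 0, hN⟩
    exact hy u hu hocc
  obtain ⟨x, hx, hpref⟩ := hX.exists_pref_of_mem_language hN
  exact ⟨x, hx, PiNat.mem_cylinder_iff.2 fun i hi => (hpref i (by simpa)).trans (by simp)⟩

lemma IsSubshift.exists_minForbidden_length_gt [Finite Λ] [DiscreteTopology Λ]
    (hX : IsSubshift X) (h : ¬ IsSFT X) (M : ℕ) : ∃ u, IsMinForbidden X u ∧ M < u.length := by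
  by_contra! hM
  exact h ⟨_, (List.finite_length_le Λ M).subset hM, hX.eq_forbidSpace_minForbidden⟩

lemma IsSubshift.exists_cat_not_mem [Finite Λ] [DiscreteTopology Λ] (hX : IsSubshift X)
    (h : ¬ IsSFT X) (M : ℕ) :
    ∃ (a : Λ) (q : ℕ → Λ), q ∈ X ∧ cat [a] q ∉ X ∧ ∃ p ∈ X, p ∈ PiNat.cylinder (cat [a] q) M := by
  obtain ⟨u, ⟨hu, hv, hw⟩, hMu⟩ := hX.exists_minForbidden_length_gt h M
  obtain ⟨a, v, rfl⟩ := List.exists_cons_of_length_pos (by omega : 0 < u.length)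
  rw [List.length_cons] at hMu
  rw [List.tail_cons] at hv
  obtain ⟨q, hq, hqv⟩ := hX.exists_pref_of_mem_language hv
  obtain ⟨p, hp, hpw⟩ := hX.exists_pref_of_mem_language hw
  have hpref := pref_cons_cat a hqv
  refine ⟨a, q, hq, fun hmem => hu (mem_language_of_pref hmem hpref), p, hp,
    PiNat.mem_cylinder_iff.2 fun i hi => ?_⟩
  rw [hpw i (by simp; omega), hpref i (by simp; omega), List.getElem_dropLast]

end MinimalForbiddenWords

section Spectrum

open Filter Topology

variable {Λ : Type} [DecidableEq Λ] [TopologicalSpace Λ] {X : Set (ℕ → Λ)}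

lemma IsSubshift.image_xiB_eq_omega [Finite Λ] (hX : IsSubshift X)
    (hc : ContinuousOn (xiB X) X) : xiB X '' X = Omega X :=
  subset_antisymm subset_closure
    (closure_minimal subset_rfl (hX.2.1.isCompact.image_of_continuousOn hc).isClosed)

/-- Let `ξ` be a limit of `ξ_q` for the words `aq ∉ X` of `exists_cat_not_mem`, along which
`q → z` and `a` is eventually `a₀`. Its stem is `z`, so `ξ = ξ_x` forces `x = z`; but `a₀z ∈ X`
puts `a₀⁻¹` in `ξ_z`, while no `ξ_q` contains it. -/
lemma IsSubshift.exists_mem_omega_not_mem_image [Finite Λ] [DiscreteTopology Λ]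
    (hX : IsSubshift X) (h : ¬ IsSFT X) : ∃ ξ ∈ Omega X, ξ ∉ xiB X '' X := by
  choose a q hqX haq p hpX hp using hX.exists_cat_not_mem h
  obtain ⟨𝒰, h𝒰⟩ := Ultrafilter.exists_le (atTop : Filter ℕ)
  obtain ⟨a₀, ha₀⟩ : ∃ a₀, Tendsto a 𝒰 (𝓝 a₀) := ⟨_, (𝒰.map a).le_nhds_lim⟩
  obtain ⟨z, hz⟩ : ∃ z, Tendsto q 𝒰 (𝓝 z) := ⟨_, (𝒰.map q).le_nhds_lim⟩
  obtain ⟨ξ, hξ⟩ : ∃ ξ, Tendsto (fun M => xiB X (q M)) 𝒰 (𝓝 ξ) :=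
    ⟨_, (𝒰.map fun M => xiB X (q M)).le_nhds_lim⟩
  have ha : ∀ᶠ M in 𝒰, a M = a₀ := tendsto_pure.1 (nhds_discrete Λ ▸ ha₀)
  have hqz (N : ℕ) : ∀ᶠ M in 𝒰, q M ∈ PiNat.cylinder z N :=
    hz.eventually_mem ((PiNat.isOpen_cylinder _ z N).mem_nhds (PiNat.self_mem_cylinder z N))
  have hqξ (g : FreeGroup Λ) : ∀ᶠ M in 𝒰, xiB X (q M) g = ξ g :=
    tendsto_pure.1 (nhds_discrete Bool ▸ tendsto_pi_nhds.1 hξ g)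
  have hzX : z ∈ X := hX.2.1.mem_of_tendsto hz (.of_forall hqX)
  have hazX : cat [a₀] z ∈ X := by
    refine mem_of_forall_exists_mem_cylinder hX.2.1 fun N => ?_
    obtain ⟨M, hMa, hMz, hNM⟩ := (ha.and ((hqz N).and (h𝒰 (eventually_ge_atTop N)))).exists
    refine ⟨p M, hpX M, PiNat.mem_cylinder_iff.2 fun i hi => ?_⟩
    rw [PiNat.mem_cylinder_iff.1 (hp M) i (by omega), hMa]
    exact PiNat.mem_cylinder_iff.1 (cat_mem_cylinder_cat [a₀] hMz) i hi
  refine ⟨ξ, mem_closure_of_tendsto hξ (.of_forall fun M => ⟨q M, hqX M, rfl⟩), ?_⟩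
  rintro ⟨x, hx, rfl⟩
  obtain rfl : x = z := eq_of_forall_xiB_wd_eq hX hx hzX fun α => by
    obtain ⟨M, hMξ, hMz⟩ := ((hqξ (wd α)).and (hqz α.length)).exists
    rw [← hMξ, Bool.eq_iff_iff, xiB_eq_true_iff, xiB_eq_true_iff, wd_mem_xiSet_iff hX (hqX M),
      wd_mem_xiSet_iff hX hzX]
    exact ⟨fun hα => hα.of_mem_cylinder ((PiNat.mem_cylinder_comm _ _ _).1 hMz) le_rfl,
      fun hα => hα.of_mem_cylinder hMz le_rfl⟩
  obtain ⟨M, hMξ, hMa⟩ := ((hqξ (wd [a₀])⁻¹).and ha).exists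
  apply haq M
  rwa [hMa, ← inv_wd_mem_xiSet_iff hX (hqX M), ← xiB_eq_true_iff, hMξ, xiB_eq_true_iff,
    inv_wd_mem_xiSet_iff hX hx]

end Spectrum

lemma exists_isOpen_image_inter_eq {α β : Type} [TopologicalSpace α] [TopologicalSpace β]
    [T2Space β] {f : α → β} {K : Set α} (hK : IsCompact K) (hf : ContinuousOn f K)
    (hinj : Set.InjOn f K) {V : Set α} (hV : IsOpen V) :
    ∃ W, IsOpen W ∧ f '' (V ∩ K) = W ∩ f '' K :=
  ⟨(f '' (K \ V))ᶜ,
    ((hK.diff hV).image_of_continuousOn (hf.mono Set.sdiff_subset)).isClosed.isOpen_compl, by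
      rw [Set.inter_comm V, ← Set.sdiff_sdiff_right_self, hinj.image_sdiff_subset Set.sdiff_subset,
        Set.sdiff_eq, Set.inter_comm]⟩

theorem sft_tfae_general {Λ : Type} [Fintype Λ] [DecidableEq Λ]
    [TopologicalSpace Λ] [DiscreteTopology Λ]
    (X : Set (ℕ → Λ)) (hX : IsSubshift X) :
    List.TFAE
      [IsSFT X,
       Omega X ⊆ (fun x => xiB X x) '' X,
       ContinuousOn (fun x => xiB X x) X,
       Set.BijOn (fun x => xiB X x) X (Omega X) ∧
         ContinuousOn (fun x => xiB X x) X ∧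
         ∀ V : Set (ℕ → Λ), IsOpen V →
           ∃ W : Set (FreeGroup Λ → Bool), IsOpen W ∧
             (fun x => xiB X x) '' (V ∩ X) = W ∩ Omega X] := by
  tfae_have 1 → 3 := continuousOn_xiB_of_isSFT hX
  tfae_have 3 → 2 := fun hc => (hX.image_xiB_eq_omega hc).superset
  tfae_have 2 → 1 := fun hsurj => by
    by_contra hsft
    obtain ⟨ξ, hξ, hξX⟩ := hX.exists_mem_omega_not_mem_image hsft
    exact hξX (hsurj hξ)
  tfae_have 4 → 3 := fun h => h.2.1
  tfae_have 3 → 4 := fun hc => by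
    have himage := hX.image_xiB_eq_omega hc
    refine ⟨⟨himage ▸ Set.mapsTo_image _ _, xiB_injOn hX, himage.symm.subset⟩, hc, fun V hV => ?_⟩
    exact himage ▸ exists_isOpen_image_inter_eq hX.2.1.isCompact hc (xiB_injOn hX) hV
  tfae_finish

/-- TFAE: `X` is of finite type; `Ξ` is onto `Ω_X`; `Ξ` is continuous;
`Ξ` is a homeomorphism from `X` onto `Ω_X`. -/
theorem sft_tfae {Λ : Type} [Fintype Λ] [Nonempty Λ] [DecidableEq Λ]
    [TopologicalSpace Λ] [DiscreteTopology Λ]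
    (X : Set (ℕ → Λ)) (hX : IsSubshift X) :
    List.TFAE
      [IsSFT X,
       Omega X ⊆ (fun x => xiB X x) '' X,
       ContinuousOn (fun x => xiB X x) X,
       Set.BijOn (fun x => xiB X x) X (Omega X) ∧
         ContinuousOn (fun x => xiB X x) X ∧
         ∀ V : Set (ℕ → Λ), IsOpen V →
           ∃ W : Set (FreeGroup Λ → Bool), IsOpen W ∧
             (fun x => xiB X x) '' (V ∩ X) = W ∩ Omega X] :=
  sft_tfae_general X hX

end SubshiftPaper
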